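/- Let G be a finite connected simple graph with edge-weight function w : E(G) → ℕ, interdiction cost function c : E(G) → ℕ, and budget B ∈ ℕ, and let I ⊆ E(G) satisfy c(I) ≤ B. Fix a vertex v, let d(x) be the graph distance from v to x, for i ≥ 0 let E_i = { {x,y} ∈ E(G) : d(x) = i, d(y) = i+1 }, fix an integer k > 1, and for i ∈ {0,…,k−1} set F_i = ⋃_{j ≥ 0} E_{i+jk}; let G_i be the subgraph of G induced by E(G) \ F_i and H_i the subgraph induced by F_i. Then there exists i ∈ {0, 1, …, k−1} such that for all edge sets Î₁ ⊆ E(G) \ F_i and Î₂ ⊆ F_i with c(Î₁) ≤ c(I \ F_i), c(Î₂) ≤ c(I ∩ F_i), ν_w(G_i \ Î₁) ≤ ν_w(G_i \ (I \ F_i)), and ν_w(H_i \ Î₂) ≤ ν_w(H_i \ (I ∩ F_i)), one has c(Î₁ ∪ Î₂) ≤ B and k·ν_w(G \ (Î₁ ∪ Î₂)) ≤ (k+2)·ν_w(G \ I). -/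

import Mathlib

/-!
Let `Mᵢ` be a maximum-weight matching of `Hᵢ \ (I ∩ Fᵢ)`. Two edges on BFS levels of the same
parity that share a vertex lie on the same level, hence in the same class `Fᵢ`; so the edges of
`⋃ᵢ Mᵢ` on even levels form a matching of `G \ I`, and so do those on odd levels. Hence
`∑ᵢ ν_w(Hᵢ \ (I ∩ Fᵢ)) ≤ 2 ν_w(G \ I)`, and some `i` has `k ν_w(Hᵢ \ (I ∩ Fᵢ)) ≤ 2 ν_w(G \ I)`.
For this `i`, a matching of `G \ (Î₁ ∪ Î₂)` splits along `Fᵢ` into matchings of `Gᵢ \ Î₁` and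
`Hᵢ \ Î₂`, so `ν_w(G \ (Î₁ ∪ Î₂)) ≤ ν_w(Gᵢ \ (I \ Fᵢ)) + ν_w(Hᵢ \ (I ∩ Fᵢ))
≤ ν_w(G \ I) + 2 ν_w(G \ I) / k`. The cost bound is additivity of `c` over `I = (I \ Fᵢ) ∪ (I ∩ Fᵢ)`.
-/

open scoped BigOperators

/-- `M` is a matching in the simple graph `G`: a set of edges of `G`, no two of
which share an endpoint. -/
def IsMatchingOn {V : Type*} (G : SimpleGraph V) (M : Set (Sym2 V)) : Prop :=
  M ⊆ G.edgeSet ∧ ∀ e ∈ M, ∀ f ∈ M, e ≠ f → ∀ v : V, v ∈ e → v ∉ f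

/-- `nuW G w` is the maximum weight of a matching in `G` with respect to the
edge-weight function `w`. -/
noncomputable def nuW {V : Type*} (G : SimpleGraph V) (w : Sym2 V → ℕ) : ℕ :=
  sSup {n : ℕ | ∃ M : Set (Sym2 V), IsMatchingOn G M ∧ (∑ᶠ e ∈ M, w e) = n}

/-- `levelEdges G v i` is the set of edges `{x, y}` of `G` with `d(x) = i` and
`d(y) = i + 1`, where `d` is the graph distance from `v`. -/
def levelEdges {V : Type*} (G : SimpleGraph V) (v : V) (i : ℕ) : Set (Sym2 V) :=
  {e : Sym2 V | e ∈ G.edgeSet ∧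
    ∃ x y : V, e = s(x, y) ∧ G.dist v x = i ∧ G.dist v y = i + 1}

/-- `levelUnion G v k i = ⋃ j, levelEdges G v (i + j * k)`, the union of every
`k`-th BFS level starting at level `i`. -/
def levelUnion {V : Type*} (G : SimpleGraph V) (v : V) (k i : ℕ) : Set (Sym2 V) :=
  ⋃ j : ℕ, levelEdges G v (i + j * k)


section Finsum

variable {α M : Type*} [AddCommMonoid M] [PartialOrder M] [CanonicallyOrderedAdd M]
  {f : α → M} {s t : Set α}

theorem finsum_mem_le_finsum_mem_of_subset (hst : s ⊆ t) (ht : t.Finite) :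
    ∑ᶠ a ∈ s, f a ≤ ∑ᶠ a ∈ t, f a := by
  rw [← finsum_mem_add_sdiff hst ht]
  exact le_self_add

theorem finsum_mem_union_le (hs : s.Finite) (ht : t.Finite) :
    ∑ᶠ a ∈ s ∪ t, f a ≤ (∑ᶠ a ∈ s, f a) + ∑ᶠ a ∈ t, f a := by
  rw [← finsum_mem_union_inter hs ht]
  exact le_self_add

end Finsum

section Matching

variable {V : Type*} {G G' : SimpleGraph V} {M N : Set (Sym2 V)} {w : Sym2 V → ℕ}

theorem IsMatchingOn.of_subset (hM : IsMatchingOn G M) (hNM : N ⊆ M)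
    (hN : N ⊆ G'.edgeSet) : IsMatchingOn G' N :=
  ⟨hN, fun e he f hf => hM.2 e (hNM he) f (hNM hf)⟩

variable [Finite V]

theorem bddAbove_matchingWeights (G : SimpleGraph V) (w : Sym2 V → ℕ) :
    BddAbove {n : ℕ | ∃ M : Set (Sym2 V), IsMatchingOn G M ∧ (∑ᶠ e ∈ M, w e) = n} := by
  refine ⟨∑ᶠ e ∈ (Set.univ : Set (Sym2 V)), w e, ?_⟩
  rintro n ⟨M, -, rfl⟩
  exact finsum_mem_le_finsum_mem_of_subset (Set.subset_univ M) Set.finite_univ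

theorem IsMatchingOn.finsum_le_nuW (hM : IsMatchingOn G M) : ∑ᶠ e ∈ M, w e ≤ nuW G w :=
  le_csSup (bddAbove_matchingWeights G w) ⟨M, hM, rfl⟩

theorem exists_isMatchingOn_finsum_eq_nuW (G : SimpleGraph V) (w : Sym2 V → ℕ) :
    ∃ M, IsMatchingOn G M ∧ ∑ᶠ e ∈ M, w e = nuW G w := by
  have hne : {n : ℕ | ∃ M, IsMatchingOn G M ∧ ∑ᶠ e ∈ M, w e = n}.Nonempty :=
    ⟨0, ∅, ⟨Set.empty_subset _, by simp⟩, finsum_mem_empty⟩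
  exact Nat.sSup_mem hne (bddAbove_matchingWeights G w)

theorem nuW_le_of_forall {b : ℕ} (h : ∀ M, IsMatchingOn G M → ∑ᶠ e ∈ M, w e ≤ b) :
    nuW G w ≤ b := by
  obtain ⟨M, hM, hMw⟩ := exists_isMatchingOn_finsum_eq_nuW G w
  exact hMw ▸ h M hM

theorem nuW_mono (h : G ≤ G') : nuW G w ≤ nuW G' w :=
  nuW_le_of_forall fun _ hM =>
    (hM.of_subset subset_rfl (hM.1.trans (SimpleGraph.edgeSet_mono h))).finsum_le_nuW

theorem nuW_deleteEdges_union_le (G : SimpleGraph V) (w : Sym2 V → ℕ) (F I₁ I₂ : Set (Sym2 V)) :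
    nuW (G.deleteEdges (I₁ ∪ I₂)) w ≤
      nuW ((SimpleGraph.fromEdgeSet (G.edgeSet \ F)).deleteEdges I₁) w +
        nuW ((SimpleGraph.fromEdgeSet F).deleteEdges I₂) w := by
  refine nuW_le_of_forall fun M hM => ?_
  have hMG : ∀ e ∈ M, e ∈ G.edgeSet ∧ e ∉ I₁ ∧ e ∉ I₂ := fun e he => by
    simpa [not_or] using hM.1 he
  have hout : IsMatchingOn ((SimpleGraph.fromEdgeSet (G.edgeSet \ F)).deleteEdges I₁) (M \ F) :=
    hM.of_subset Set.sdiff_subset fun e he => by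
      obtain ⟨hG, h₁, -⟩ := hMG e he.1
      simp [he.2, h₁, hG]
  have hin : IsMatchingOn ((SimpleGraph.fromEdgeSet F).deleteEdges I₂) (M ∩ F) :=
    hM.of_subset Set.inter_subset_left fun e he => by
      obtain ⟨hG, -, h₂⟩ := hMG e he.1
      simp [he.2, h₂, G.not_isDiag_of_mem_edgeSet hG]
  calc ∑ᶠ e ∈ M, w e = (∑ᶠ e ∈ M ∩ F, w e) + ∑ᶠ e ∈ M \ F, w e :=
        (finsum_mem_inter_add_sdiff F (Set.toFinite M)).symm
    _ ≤ _ := by rw [add_comm]; exact add_le_add hout.finsum_le_nuW hin.finsum_le_nuW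

end Matching

section Levels

variable {V : Type*} {G : SimpleGraph V} {v z : V} {e : Sym2 V} {k i ℓ ℓ' : ℕ}

theorem dist_eq_or_eq_add_one_of_mem_levelEdges (he : e ∈ levelEdges G v ℓ) (hz : z ∈ e) :
    G.dist v z = ℓ ∨ G.dist v z = ℓ + 1 := by
  obtain ⟨-, x, y, rfl, hx, hy⟩ := he
  rcases Sym2.mem_iff.mp hz with rfl | rfl <;> simp [hx, hy]

theorem levelEdges_index_unique (he : e ∈ levelEdges G v ℓ) (he' : e ∈ levelEdges G v ℓ') :
    ℓ = ℓ' := by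
  obtain ⟨-, x, y, rfl, hx, hy⟩ := he
  have hx' := dist_eq_or_eq_add_one_of_mem_levelEdges he' (Sym2.mem_mk_left x y)
  have hy' := dist_eq_or_eq_add_one_of_mem_levelEdges he' (Sym2.mem_mk_right x y)
  omega

theorem mem_levelUnion_iff (hi : i < k) :
    e ∈ levelUnion G v k i ↔ ∃ ℓ, e ∈ levelEdges G v ℓ ∧ ℓ % k = i := by
  simp only [levelUnion, Set.mem_iUnion]
  constructor
  · rintro ⟨j, hj⟩
    exact ⟨i + j * k, hj, by rw [Nat.add_mul_mod_self_right, Nat.mod_eq_of_lt hi]⟩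
  · rintro ⟨ℓ, hℓ, rfl⟩
    exact ⟨ℓ / k, by rwa [Nat.mod_add_div']⟩

theorem levelUnion_subset_edgeSet : levelUnion G v k i ⊆ G.edgeSet :=
  Set.iUnion_subset fun _ _ he => he.1

theorem levelUnion_index_unique {i' : ℕ} (hi : i < k) (hi' : i' < k)
    (he : e ∈ levelUnion G v k i) (he' : e ∈ levelUnion G v k i') : i = i' := by
  obtain ⟨ℓ, hℓ, rfl⟩ := (mem_levelUnion_iff hi).mp he
  obtain ⟨ℓ', hℓ', rfl⟩ := (mem_levelUnion_iff hi').mp he'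
  rw [levelEdges_index_unique hℓ hℓ']

theorem isMatchingOn_biUnion_inter_levelUnion_two {G' : SimpleGraph V} {M : ℕ → Set (Sym2 V)}
    (hM : ∀ i < k, IsMatchingOn G' (M i)) (hMF : ∀ i < k, M i ⊆ levelUnion G v k i) {p : ℕ}
    (hp : p < 2) : IsMatchingOn G' ((⋃ i < k, M i) ∩ levelUnion G v 2 p) := by
  refine ⟨fun e he => ?_, fun e he f hf hef z hze hzf => ?_⟩
  · obtain ⟨i, hi, hei⟩ := by simpa using he.1
    exact (hM i hi).1 hei
  simp only [Set.mem_inter_iff, Set.mem_iUnion, exists_prop] at he hf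
  obtain ⟨⟨i, hi, hei⟩, hep⟩ := he
  obtain ⟨⟨i', hi', hfi'⟩, hfp⟩ := hf
  obtain ⟨ℓ, hℓ, rfl⟩ := (mem_levelUnion_iff hi).mp (hMF i hi hei)
  obtain ⟨ℓ', hℓ', rfl⟩ := (mem_levelUnion_iff hi').mp (hMF i' hi' hfi')
  obtain ⟨m, hm, rfl⟩ := (mem_levelUnion_iff hp).mp hep
  obtain ⟨m', hm', hmm'⟩ := (mem_levelUnion_iff hp).mp hfp
  rw [levelEdges_index_unique hm hℓ, levelEdges_index_unique hm' hℓ'] at hmm'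
  have hz := dist_eq_or_eq_add_one_of_mem_levelEdges hℓ hze
  have hz' := dist_eq_or_eq_add_one_of_mem_levelEdges hℓ' hzf
  obtain rfl : ℓ = ℓ' := by omega
  exact (hM _ hi).2 e hei f hfi' hef z hze hzf

theorem sum_finsum_le_two_mul_nuW [Finite V] {G' : SimpleGraph V} (w : Sym2 V → ℕ)
    {M : ℕ → Set (Sym2 V)} (hM : ∀ i < k, IsMatchingOn G' (M i))
    (hMF : ∀ i < k, M i ⊆ levelUnion G v k i) :
    ∑ i ∈ Finset.range k, ∑ᶠ e ∈ M i, w e ≤ 2 * nuW G' w := by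
  set U := ⋃ i < k, M i
  have hdisj : (Set.Iio k).PairwiseDisjoint M := fun i hi i' hi' hii' =>
    Set.disjoint_left.mpr fun e he he' =>
      hii' (levelUnion_index_unique hi hi' (hMF i hi he) (hMF i' hi' he'))
  have hU : U ⊆ levelUnion G v 2 0 ∪ levelUnion G v 2 1 := by
    intro e he
    obtain ⟨i, hi, hei⟩ := by simpa [U] using he
    obtain ⟨ℓ, hℓ, -⟩ := (mem_levelUnion_iff hi).mp (hMF i hi hei)
    have hpar := (mem_levelUnion_iff (G := G) (v := v) (Nat.mod_lt ℓ two_pos)).mpr ⟨ℓ, hℓ, rfl⟩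
    rcases Nat.mod_two_eq_zero_or_one ℓ with h | h <;> rw [h] at hpar <;> simp [hpar]
  calc ∑ i ∈ Finset.range k, ∑ᶠ e ∈ M i, w e = ∑ᶠ e ∈ U, w e := by
        rw [← finsum_mem_coe_finset, Finset.coe_range]
        exact (finsum_mem_biUnion hdisj (Set.finite_Iio k) fun _ _ => Set.toFinite _).symm
    _ = ∑ᶠ e ∈ (U ∩ levelUnion G v 2 0) ∪ (U ∩ levelUnion G v 2 1), w e := by
        rw [← Set.inter_union_distrib_left, Set.inter_eq_left.mpr hU]
    _ ≤ (∑ᶠ e ∈ U ∩ levelUnion G v 2 0, w e) + ∑ᶠ e ∈ U ∩ levelUnion G v 2 1, w e :=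
        finsum_mem_union_le (Set.toFinite _) (Set.toFinite _)
    _ ≤ nuW G' w + nuW G' w :=
        add_le_add (isMatchingOn_biUnion_inter_levelUnion_two hM hMF two_pos).finsum_le_nuW
          (isMatchingOn_biUnion_inter_levelUnion_two hM hMF one_lt_two).finsum_le_nuW
    _ = 2 * nuW G' w := (two_mul _).symm

end Levels

section Interdiction

variable {V : Type*} [Finite V] (G : SimpleGraph V) (w : Sym2 V → ℕ) (I : Set (Sym2 V)) (v : V)

theorem sum_nuW_levelUnion_le (k : ℕ) :
    ∑ i ∈ Finset.range k,
        nuW ((SimpleGraph.fromEdgeSet (levelUnion G v k i)).deleteEdges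
          (I ∩ levelUnion G v k i)) w ≤
      2 * nuW (G.deleteEdges I) w := by
  choose M hM hMw using fun i => exists_isMatchingOn_finsum_eq_nuW
    ((SimpleGraph.fromEdgeSet (levelUnion G v k i)).deleteEdges (I ∩ levelUnion G v k i)) w
  have hMF : ∀ i, ∀ e ∈ M i, e ∈ levelUnion G v k i ∧ e ∉ I := fun i e he => by
    have := (hM i).1 he
    simp only [SimpleGraph.edgeSet_deleteEdges, SimpleGraph.edgeSet_fromEdgeSet, Set.mem_sdiff,
      Set.mem_inter_iff] at this
    tauto
  rw [← Finset.sum_congr rfl fun i _ => hMw i]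
  refine sum_finsum_le_two_mul_nuW w (fun i _ => (hM i).of_subset subset_rfl fun e he => ?_)
    fun i _ e he => (hMF i e he).1
  rw [SimpleGraph.edgeSet_deleteEdges]
  exact ⟨levelUnion_subset_edgeSet (hMF i e he).1, (hMF i e he).2⟩

theorem exists_mul_nuW_levelUnion_le {k : ℕ} (hk : 0 < k) :
    ∃ i < k, k * nuW ((SimpleGraph.fromEdgeSet (levelUnion G v k i)).deleteEdges
        (I ∩ levelUnion G v k i)) w ≤ 2 * nuW (G.deleteEdges I) w := by
  obtain ⟨i, hi, hle⟩ := Finset.exists_le_of_sum_le (Finset.nonempty_range_iff.mpr hk.ne')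
    (f := fun i => k * nuW ((SimpleGraph.fromEdgeSet (levelUnion G v k i)).deleteEdges
        (I ∩ levelUnion G v k i)) w)
    (g := fun _ => 2 * nuW (G.deleteEdges I) w) (by
      rw [← Finset.mul_sum, Finset.sum_const, Finset.card_range, smul_eq_mul]
      exact Nat.mul_le_mul_left k (sum_nuW_levelUnion_le G w I v k))
  exact ⟨i, Finset.mem_range.mp hi, hle⟩

end Interdiction

theorem matching_interdiction_approx_general {V : Type*} [Fintype V] (G : SimpleGraph V)
    (w c : Sym2 V → ℕ) (B : ℕ)
    (I : Set (Sym2 V)) (hIc : (∑ᶠ e ∈ I, c e) ≤ B)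
    (v : V) (k : ℕ) (hk : 1 < k) :
    ∃ i < k,
      ∀ I1 I2 : Set (Sym2 V),
        I1 ⊆ G.edgeSet \ levelUnion G v k i →
        I2 ⊆ levelUnion G v k i →
        (∑ᶠ e ∈ I1, c e) ≤ (∑ᶠ e ∈ (I \ levelUnion G v k i), c e) →
        (∑ᶠ e ∈ I2, c e) ≤ (∑ᶠ e ∈ (I ∩ levelUnion G v k i), c e) →
        nuW ((SimpleGraph.fromEdgeSet (G.edgeSet \ levelUnion G v k i)).deleteEdges I1) w ≤
          nuW ((SimpleGraph.fromEdgeSet (G.edgeSet \ levelUnion G v k i)).deleteEdges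
            (I \ levelUnion G v k i)) w →
        nuW ((SimpleGraph.fromEdgeSet (levelUnion G v k i)).deleteEdges I2) w ≤
          nuW ((SimpleGraph.fromEdgeSet (levelUnion G v k i)).deleteEdges
            (I ∩ levelUnion G v k i)) w →
        (∑ᶠ e ∈ (I1 ∪ I2), c e) ≤ B ∧
          k * nuW (G.deleteEdges (I1 ∪ I2)) w ≤ (k + 2) * nuW (G.deleteEdges I) w := by
  obtain ⟨i, hi, hlayer⟩ := exists_mul_nuW_levelUnion_le G w I v (Nat.zero_lt_of_lt hk)
  refine ⟨i, hi, fun I₁ I₂ _ _ hc₁ hc₂ hν₁ hν₂ => ⟨?_, ?_⟩⟩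
  · calc ∑ᶠ e ∈ I₁ ∪ I₂, c e ≤ (∑ᶠ e ∈ I₁, c e) + ∑ᶠ e ∈ I₂, c e :=
          finsum_mem_union_le (Set.toFinite _) (Set.toFinite _)
      _ ≤ (∑ᶠ e ∈ I \ levelUnion G v k i, c e) + ∑ᶠ e ∈ I ∩ levelUnion G v k i, c e :=
          add_le_add hc₁ hc₂
      _ = ∑ᶠ e ∈ I, c e := by rw [add_comm, finsum_mem_inter_add_sdiff _ (Set.toFinite I)]
      _ ≤ B := hIc
  · have hout : (SimpleGraph.fromEdgeSet (G.edgeSet \ levelUnion G v k i)).deleteEdges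
        (I \ levelUnion G v k i) ≤ G.deleteEdges I := by
      intro a b
      simp only [SimpleGraph.deleteEdges_adj, SimpleGraph.fromEdgeSet_adj, Set.mem_sdiff,
        SimpleGraph.mem_edgeSet]
      tauto
    calc k * nuW (G.deleteEdges (I₁ ∪ I₂)) w
        ≤ k * (nuW (G.deleteEdges I) w + nuW ((SimpleGraph.fromEdgeSet
            (levelUnion G v k i)).deleteEdges (I ∩ levelUnion G v k i)) w) :=
          Nat.mul_le_mul_left k <| (nuW_deleteEdges_union_le G w _ I₁ I₂).trans <|
            add_le_add (hν₁.trans (nuW_mono hout)) hν₂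
      _ ≤ (k + 2) * nuW (G.deleteEdges I) w := by
          rw [mul_add, add_mul]; exact Nat.add_le_add_left hlayer _

/-- Approximation guarantee of the pseudo-PTAS for maximum matching interdiction:
for any interdiction set `I` of cost at most `B`, there exists a BFS layer class
`i < k` such that combining any interdiction set `Î₁` that is (budget-wise and
objective-wise) at least as good as `I \ Fᵢ` on `Gᵢ` with any interdiction set `Î₂`
at least as good as `I ∩ Fᵢ` on `Hᵢ` yields an interdiction set of cost at most `B`
whose objective value is within a factor `(k + 2)/k` of that of `I`. -/
theorem matching_interdiction_approx {V : Type*} [Fintype V] (G : SimpleGraph V)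
    (hG : G.Connected) (w c : Sym2 V → ℕ) (B : ℕ)
    (I : Set (Sym2 V)) (hIsub : I ⊆ G.edgeSet) (hIc : (∑ᶠ e ∈ I, c e) ≤ B)
    (v : V) (k : ℕ) (hk : 1 < k) :
    ∃ i < k,
      ∀ I1 I2 : Set (Sym2 V),
        I1 ⊆ G.edgeSet \ levelUnion G v k i →
        I2 ⊆ levelUnion G v k i →
        (∑ᶠ e ∈ I1, c e) ≤ (∑ᶠ e ∈ (I \ levelUnion G v k i), c e) →
        (∑ᶠ e ∈ I2, c e) ≤ (∑ᶠ e ∈ (I ∩ levelUnion G v k i), c e) →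
        nuW ((SimpleGraph.fromEdgeSet (G.edgeSet \ levelUnion G v k i)).deleteEdges I1) w ≤
          nuW ((SimpleGraph.fromEdgeSet (G.edgeSet \ levelUnion G v k i)).deleteEdges
            (I \ levelUnion G v k i)) w →
        nuW ((SimpleGraph.fromEdgeSet (levelUnion G v k i)).deleteEdges I2) w ≤
          nuW ((SimpleGraph.fromEdgeSet (levelUnion G v k i)).deleteEdges
            (I ∩ levelUnion G v k i)) w →
        (∑ᶠ e ∈ (I1 ∪ I2), c e) ≤ B ∧
          k * nuW (G.deleteEdges (I1 ∪ I2)) w ≤ (k + 2) * nuW (G.deleteEdges I) w :=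
  matching_interdiction_approx_general G w c B I hIc v k hk
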